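/- Let A be a ring, let M be a Noetherian uniform right A-module, and let x be a central element of A such that Nx = 0 for some nonzero submodule N of M. Then M is Artinian if and only if the submodule Ann_M(x) = {m ∈ M : mx = 0} is Artinian. -/

import Mathlib

/-!
Multiplication by `x` is an endomorphism `ψ` of `M` (as `x` is central) whose kernel is
`Ann_M(x)` and contains `N`. Since `M` is Noetherian, `ker ψⁿ` and `range ψⁿ` are disjoint for
large `n`; as `ker ψⁿ ⊇ N ≠ 0` and `M` is uniform, `range ψⁿ = 0`, i.e. `ψ` is nilpotent. Finally
`ker ψᵏ⁺¹` is an extension of a submodule of `ker ψᵏ` (its image under `ψ`) by `ker ψ`, so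
`M = ker ψⁿ` is Artinian as soon as `ker ψ` is.
-/

open MulOpposite

/-- A module is uniform if any two nonzero submodules intersect nontrivially. -/
def IsUniformMod (R : Type*) [Ring R] (M : Type*) [AddCommGroup M] [Module R M] : Prop :=
  ∀ N L : Submodule R M, N ≠ ⊥ → L ≠ ⊥ → N ⊓ L ≠ ⊥

/-- For a central element `x` of `A` and a right `A`-module `M`, the submodule
`Ann_M(x) = {m ∈ M : m·x = 0}`. -/
def annSubmodule (A : Type*) [Ring A] (M : Type*) [AddCommGroup M] [Module Aᵐᵒᵖ M]
    (x : A) (hx : ∀ a : A, a * x = x * a) : Submodule Aᵐᵒᵖ M where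
  carrier := {m | op x • m = 0}
  add_mem' := by
    intro a b ha hb
    simp only [Set.mem_setOf_eq, smul_add] at *
    rw [ha, hb, add_zero]
  zero_mem' := by simp
  smul_mem' := by
    intro c m hm
    simp only [Set.mem_setOf_eq] at *
    have hcomm : op x * c = c * op x := by
      apply unop_injective
      simp [hx c.unop]
    rw [smul_smul, hcomm, ← smul_smul, hm, smul_zero]

section Endomorphism

variable {R M : Type*} [Ring R] [AddCommGroup M] [Module R M]

theorem Module.End.ker_le_ker_pow_succ (f : Module.End R M) (k : ℕ) :
    LinearMap.ker f ≤ LinearMap.ker (f ^ (k + 1)) := by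
  rw [pow_succ, Module.End.mul_eq_comp]
  exact LinearMap.ker_le_ker_comp f (f ^ k)

theorem isArtinian_ker_pow (f : Module.End R M) [IsArtinian R (LinearMap.ker f)] :
    ∀ k : ℕ, IsArtinian R (LinearMap.ker (f ^ k))
  | 0 => by
    rw [pow_zero, Module.End.one_eq_id, LinearMap.ker_id]
    infer_instance
  | k + 1 => by
    have := isArtinian_ker_pow f k
    have hmaps : ∀ m ∈ LinearMap.ker (f ^ (k + 1)), f m ∈ LinearMap.ker (f ^ k) := fun m hm => by
      rwa [LinearMap.mem_ker, ← Module.End.mul_apply, ← pow_succ]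
    refine isArtinian_of_range_eq_ker (Submodule.inclusion (f.ker_le_ker_pow_succ k))
      (f.restrict hmaps) ?_
    ext ⟨m, hm⟩
    simp [LinearMap.restrict_apply, Subtype.ext_iff]

theorem isArtinian_of_isNilpotent_of_isArtinian_ker {f : Module.End R M} (hf : IsNilpotent f)
    [IsArtinian R (LinearMap.ker f)] : IsArtinian R M := by
  obtain ⟨n, hn⟩ := hf
  have := isArtinian_ker_pow f n
  rw [hn, LinearMap.ker_zero] at this
  exact isArtinian_of_linearEquiv Submodule.topEquiv

theorem IsUniformMod.isNilpotent_of_ker_ne_bot [IsNoetherian R M] (hM : IsUniformMod R M)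
    {f : Module.End R M} (hf : LinearMap.ker f ≠ ⊥) : IsNilpotent f := by
  obtain ⟨n, hn⟩ := Filter.eventually_atTop.mp f.eventually_disjoint_ker_pow_range_pow
  have hdisj := hn (n + 1) n.le_succ
  have hrange : LinearMap.range (f ^ (n + 1)) = ⊥ := by
    by_contra hne
    exact hM _ _ (ne_bot_of_le_ne_bot hf (f.ker_le_ker_pow_succ n)) hne hdisj.eq_bot
  exact ⟨n + 1, LinearMap.range_eq_bot.mp hrange⟩

end Endomorphism

/-- Let `M` be a Noetherian uniform right `A`-module and `x` a central element of `A`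
killing some nonzero submodule `N` of `M`.  Then `M` is Artinian if and only if
`Ann_M(x) = {m ∈ M : m·x = 0}` is Artinian. -/
theorem artinian_iff_annihilator_artinian (A : Type*) [Ring A] (M : Type*)
    [AddCommGroup M] [Module Aᵐᵒᵖ M] (hNoeth : IsNoetherian Aᵐᵒᵖ M)
    (hUnif : IsUniformMod Aᵐᵒᵖ M) (x : A) (hx : ∀ a : A, a * x = x * a)
    (N : Submodule Aᵐᵒᵖ M) (hN : N ≠ ⊥) (hNx : ∀ m ∈ N, op x • m = 0) :
    IsArtinian Aᵐᵒᵖ M ↔ IsArtinian Aᵐᵒᵖ (annSubmodule A M x hx) := by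
  set ψ : Module.End Aᵐᵒᵖ M := Module.End.smulLeft (op x)
    (op_mem_center_iff.mpr (Semigroup.mem_center_iff.mpr hx))
  have hker : LinearMap.ker ψ = annSubmodule A M x hx := rfl
  refine ⟨fun _ => inferInstance, fun hArt => ?_⟩
  rw [← hker] at hArt
  have hNker : N ≤ LinearMap.ker ψ := hNx
  have hnil : IsNilpotent ψ := hUnif.isNilpotent_of_ker_ne_bot (ne_bot_of_le_ne_bot hN hNker)
  exact isArtinian_of_isNilpotent_of_isArtinian_ker hnil
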